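/- arXiv:2305.10356 — 5 statements merged into one kernel-verified Lean document; each statement's English description precedes it below -/
import Mathlib

section
/- Let A be symmetric with eigendecomposition A U = U Λ, and suppose all eigenvalues in Λ_k (the k smallest, placed in the diagonal matrix Λ_k) are negative. Then X = U_k √(-Λ_k) Q, for any k×k orthogonal matrix Q, is a stationary point of f1(X) = ||A + X X^T||_F^2, i.e., A X + X X^T X = 0. -/
open Matrix

/-- If `U_k` has orthonormal columns with `A U_k = U_k Λ_k`, `Λ_k` diagonal with
strictly negative entries, and `Q` is orthogonal, then `X = U_k √(-Λ_k) Q`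
is a stationary point of `f1`, i.e. `A X + X Xᵀ X = 0`. -/
theorem stationary_point_f1
    (N k : ℕ) (A : Matrix (Fin N) (Fin N) ℝ) (hA : A.IsSymm)
    (U : Matrix (Fin N) (Fin k) ℝ) (Λ : Fin k → ℝ)
    (hUorth : Uᵀ * U = 1)
    (hUeig : A * U = U * Matrix.diagonal Λ)
    (hneg : ∀ i, Λ i < 0)
    (Q : Matrix (Fin k) (Fin k) ℝ) (hQ : Qᵀ * Q = 1)
    (X : Matrix (Fin N) (Fin k) ℝ)
    (hX : X = U * Matrix.diagonal (fun i => Real.sqrt (-(Λ i))) * Q) :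
    A * X + X * (Xᵀ * X) = 0 := by
  subst hX
  set D : Matrix (Fin k) (Fin k) ℝ := Matrix.diagonal (fun i => Real.sqrt (-(Λ i))) with hD
  have hQQ : Q * Qᵀ = 1 := mul_eq_one_comm.mp hQ
  have h1 : A * (U * D * Q) = U * (Matrix.diagonal Λ * D) * Q := by
    rw [← Matrix.mul_assoc, ← Matrix.mul_assoc, hUeig]
    simp only [Matrix.mul_assoc]
  have h2 : (U * D * Q) * ((U * D * Q)ᵀ * (U * D * Q)) = U * (D * D * D) * Q := by
    rw [Matrix.transpose_mul, Matrix.transpose_mul, hD, Matrix.diagonal_transpose]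
    simp only [Matrix.mul_assoc]
    rw [← Matrix.mul_assoc Q Qᵀ, hQQ, Matrix.one_mul,
      ← Matrix.mul_assoc Uᵀ U, hUorth, Matrix.one_mul]
  rw [h1, h2, ← Matrix.add_mul, ← Matrix.mul_add]
  have h3 : Matrix.diagonal Λ * D + D * D * D = 0 := by
    rw [hD]
    simp only [Matrix.diagonal_mul_diagonal, Matrix.diagonal_add]
    rw [← Matrix.diagonal_zero]
    apply congrArg Matrix.diagonal
    funext i
    have h : Real.sqrt (-(Λ i)) * Real.sqrt (-(Λ i)) = -(Λ i) :=
      Real.mul_self_sqrt (by linarith [hneg i])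
    show Λ i * Real.sqrt (-(Λ i)) + Real.sqrt (-(Λ i)) * Real.sqrt (-(Λ i)) * Real.sqrt (-(Λ i)) = 0
    rw [h]
    ring
  rw [h3, Matrix.mul_zero, Matrix.zero_mul]
end

section
/- Let A be symmetric with orthonormal eigenvector matrix U_k (A U_k = U_k Λ_k, Λ_k diagonal with negative entries) and D a diagonal matrix with diagonal entries ±1. Then X = U_k √(-Λ_k) D is a fixed point of the TriOFM-f1 iteration, i.e., g1(X) = A X + X triu(X^T X) = 0, where triu denotes the upper triangular part (including the diagonal). -/
open Matrix

/-- The upper triangular part (including the diagonal) of a square matrix. -/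
def triu {k : ℕ} (M : Matrix (Fin k) (Fin k) ℝ) : Matrix (Fin k) (Fin k) ℝ :=
  Matrix.of fun i j => if i ≤ j then M i j else 0

lemma triu_diagonal {k : ℕ} (f : Fin k → ℝ) :
    triu (Matrix.diagonal f) = Matrix.diagonal f := by
  ext i j
  simp only [triu, Matrix.of_apply, Matrix.diagonal]
  by_cases h : i = j
  · simp [h]
  · simp [h, Matrix.of_apply]

/-- If `U_k` has orthonormal columns with `A U_k = U_k Λ_k`, `Λ_k` diagonal with
strictly negative entries, and `D` is diagonal with `±1` entries, then
`X = U_k √(-Λ_k) D` is a fixed point of TriOFM-f1: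
`g1(X) = A X + X triu(Xᵀ X) = 0`. -/
theorem fixed_point_triOFM_f1
    (N k : ℕ) (A : Matrix (Fin N) (Fin N) ℝ) (hA : A.IsSymm)
    (U : Matrix (Fin N) (Fin k) ℝ) (Λ : Fin k → ℝ)
    (hUorth : Uᵀ * U = 1)
    (hUeig : A * U = U * Matrix.diagonal Λ)
    (hneg : ∀ i, Λ i < 0)
    (d : Fin k → ℝ) (hd : ∀ i, d i = 1 ∨ d i = -1)
    (X : Matrix (Fin N) (Fin k) ℝ)
    (hX : X = U * Matrix.diagonal (fun i => Real.sqrt (-(Λ i))) * Matrix.diagonal d) :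
    A * X + X * triu (Xᵀ * X) = 0 := by
  set s : Fin k → ℝ := fun i => Real.sqrt (-(Λ i)) with hs
  have hXtX : Xᵀ * X = Matrix.diagonal (fun i => -(Λ i)) := by
    subst hX
    simp only [Matrix.transpose_mul, Matrix.diagonal_transpose, ← Matrix.mul_assoc]
    rw [Matrix.mul_assoc _ Uᵀ U, hUorth, Matrix.mul_one, Matrix.diagonal_mul_diagonal,
      Matrix.diagonal_mul_diagonal, Matrix.diagonal_mul_diagonal]
    have key : (fun i => d i * s i * s i * d i) = fun i => -(Λ i) := by
      funext i
      have hd2 : d i * d i = 1 := by rcases hd i with h | h <;> rw [h] <;> ring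
      have hs2 : s i * s i = -(Λ i) := Real.mul_self_sqrt (by linarith [hneg i])
      calc d i * s i * s i * d i = (s i * s i) * (d i * d i) := by ring
        _ = -(Λ i) := by rw [hd2, hs2]; ring
    rw [key]
  rw [hXtX, triu_diagonal, hX]
  have h1 : A * (U * Matrix.diagonal s * Matrix.diagonal d)
      = U * (Matrix.diagonal Λ * Matrix.diagonal s * Matrix.diagonal d) := by
    rw [← Matrix.mul_assoc, ← Matrix.mul_assoc, hUeig]
    simp only [Matrix.mul_assoc]
  have h2 : U * Matrix.diagonal s * Matrix.diagonal d * Matrix.diagonal (fun i => -(Λ i))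
      = U * (Matrix.diagonal s * Matrix.diagonal d * Matrix.diagonal (fun i => -(Λ i))) := by
    simp only [Matrix.mul_assoc]
  rw [h1, h2, ← Matrix.mul_add]
  have : Matrix.diagonal Λ * Matrix.diagonal s * Matrix.diagonal d
      + Matrix.diagonal s * Matrix.diagonal d * Matrix.diagonal (fun i => -(Λ i))
      = (0 : Matrix (Fin k) (Fin k) ℝ) := by
    rw [Matrix.diagonal_mul_diagonal, Matrix.diagonal_mul_diagonal,
      Matrix.diagonal_mul_diagonal, Matrix.diagonal_mul_diagonal, Matrix.diagonal_add]
    ext i j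
    rcases eq_or_ne i j with h | h
    · subst h
      simp only [Matrix.diagonal_apply_eq, Matrix.zero_apply, Pi.add_apply]
      ring
    · simp [Matrix.diagonal_apply_ne _ h]
  rw [this, Matrix.mul_zero]
end

section
/- Let A be symmetric, U_k orthonormal eigenvectors of A (A U_k = U_k Λ_k), and D diagonal with entries ±1. Then X = U_k D satisfies g2(X) = 2AX - A X triu(X^T X) - X triu(X^T A X) = 0, i.e., X is a fixed point of the TriOFM-f2 iteration. -/
open Matrix

/-- If `U_k` has orthonormal columns with `A U_k = U_k Λ_k` (`Λ_k` diagonal), and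
`D` is diagonal with `±1` entries, then `X = U_k D` is a fixed point of
TriOFM-f2: `g2(X) = 2 A X - A X triu(Xᵀ X) - X triu(Xᵀ A X) = 0`. -/
theorem fixed_point_triOFM_f2
    (N k : ℕ) (A : Matrix (Fin N) (Fin N) ℝ) (hA : A.IsSymm)
    (U : Matrix (Fin N) (Fin k) ℝ) (Λ : Fin k → ℝ)
    (hUorth : Uᵀ * U = 1)
    (hUeig : A * U = U * Matrix.diagonal Λ)
    (d : Fin k → ℝ) (hd : ∀ i, d i = 1 ∨ d i = -1)
    (X : Matrix (Fin N) (Fin k) ℝ)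
    (hX : X = U * Matrix.diagonal d) :
    (2 : ℝ) • (A * X) - A * X * triu (Xᵀ * X) - X * triu (Xᵀ * A * X) = 0 := by
  have triu_diag : ∀ v : Fin k → ℝ, triu (Matrix.diagonal v) = Matrix.diagonal v := by
    intro v
    ext i j
    simp only [triu, Matrix.of_apply]
    by_cases h : i = j
    · simp [h]
    · simp [Matrix.diagonal_apply_ne _ h]
  have htriu1 : triu (1 : Matrix (Fin k) (Fin k) ℝ) = 1 := by
    rw [← Matrix.diagonal_one, triu_diag]
  have hdd : Matrix.diagonal d * Matrix.diagonal d = (1 : Matrix (Fin k) (Fin k) ℝ) := by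
    rw [Matrix.diagonal_mul_diagonal]
    have : (fun i => d i * d i) = fun _ => (1:ℝ) := by
      funext i; rcases hd i with h | h <;> rw [h] <;> ring
    rw [this, Matrix.diagonal_one]
  subst hX
  have hXtX : (U * Matrix.diagonal d)ᵀ * (U * Matrix.diagonal d) = 1 := by
    rw [Matrix.transpose_mul, Matrix.diagonal_transpose, Matrix.mul_assoc,
      ← Matrix.mul_assoc Uᵀ, hUorth, Matrix.one_mul, hdd]
  have hcomm : (fun i => Λ i * d i) = fun i => d i * Λ i := by funext i; ring
  have hAX : A * (U * Matrix.diagonal d) = U * Matrix.diagonal d * Matrix.diagonal Λ := by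
    rw [← Matrix.mul_assoc, hUeig, Matrix.mul_assoc, Matrix.mul_assoc,
      Matrix.diagonal_mul_diagonal, Matrix.diagonal_mul_diagonal, hcomm]
  have hXtAX : (U * Matrix.diagonal d)ᵀ * A * (U * Matrix.diagonal d)
      = Matrix.diagonal Λ := by
    rw [Matrix.mul_assoc, hAX, ← Matrix.mul_assoc, hXtX, Matrix.one_mul]
  rw [hXtX, hXtAX, triu_diag, htriu1, Matrix.mul_one, hAX, two_smul]
  abel
end

section
/- If X = U_k √(-Λ_k) Q is a global minimizer of f1 (where U_k are orthonormal eigenvectors of symmetric A for its k smallest eigenvalues, all negative, and Q orthogonal), then f1(X) = ||A + X X^T||_F^2 = Σ_{i>k} λ_i^2, the sum of squares of the remaining eigenvalues of A. -/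
open Matrix Finset

/-- If `X = U_k √(-Λ_k) Q` where `U_k` collects orthonormal eigenvectors of the
symmetric matrix `A` for its `k` smallest eigenvalues (all negative) and `Q` is
orthogonal, then `f1(X) = ‖A + X Xᵀ‖_F² = Σ_{i>k} λ_i²`, the sum of squares of
the remaining eigenvalues of `A`. -/
theorem f1_global_min_value
    (N k : ℕ) (hk : k ≤ N)
    (A U : Matrix (Fin N) (Fin N) ℝ) (hA : A.IsSymm)
    (lam : Fin N → ℝ)
    (hUorth : Uᵀ * U = 1)
    (hdecomp : A = U * Matrix.diagonal lam * Uᵀ)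
    (hmono : Monotone lam)
    (hneg : ∀ i : Fin N, (i : ℕ) < k → lam i < 0)
    (Uk : Matrix (Fin N) (Fin k) ℝ)
    (hUk : Uk = Matrix.of fun (i : Fin N) (j : Fin k) => U i (Fin.castLE hk j))
    (Q : Matrix (Fin k) (Fin k) ℝ) (hQ : Qᵀ * Q = 1)
    (X : Matrix (Fin N) (Fin k) ℝ)
    (hX : X = Uk * Matrix.diagonal (fun j : Fin k => Real.sqrt (-(lam (Fin.castLE hk j)))) * Q) :
    Matrix.trace ((A + X * Xᵀ)ᵀ * (A + X * Xᵀ))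
      = ∑ i ∈ Finset.univ.filter (fun i : Fin N => k ≤ (i : ℕ)), (lam i) ^ 2 := by
  have hQQ : Q * Qᵀ = 1 := mul_eq_one_comm.mp hQ
  set d : Fin N → ℝ := fun i => if (i : ℕ) < k then -lam i else 0 with hd
  -- X * Xᵀ = Uk * diag(-λ) * Ukᵀ
  have hsq : ∀ j : Fin k,
      Real.sqrt (-(lam (Fin.castLE hk j))) * Real.sqrt (-(lam (Fin.castLE hk j)))
        = -(lam (Fin.castLE hk j)) := by
    intro j
    exact Real.mul_self_sqrt (by linarith [hneg (Fin.castLE hk j) (by simpa using j.isLt)])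
  have hXXt : X * Xᵀ = U * Matrix.diagonal d * Uᵀ := by
    rw [hX]
    have h1 : (Uk * Matrix.diagonal (fun j : Fin k => Real.sqrt (-(lam (Fin.castLE hk j)))) * Q)
        * (Uk * Matrix.diagonal (fun j : Fin k => Real.sqrt (-(lam (Fin.castLE hk j)))) * Q)ᵀ
        = Uk * Matrix.diagonal (fun j : Fin k => -(lam (Fin.castLE hk j))) * Ukᵀ := by
      rw [Matrix.transpose_mul, Matrix.transpose_mul, Matrix.diagonal_transpose]
      calc Uk * Matrix.diagonal (fun j => Real.sqrt (-(lam (Fin.castLE hk j)))) * Q *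
            (Qᵀ * (Matrix.diagonal (fun j => Real.sqrt (-(lam (Fin.castLE hk j)))) * Ukᵀ))
          = Uk * Matrix.diagonal (fun j => Real.sqrt (-(lam (Fin.castLE hk j)))) * (Q * Qᵀ) *
            (Matrix.diagonal (fun j => Real.sqrt (-(lam (Fin.castLE hk j)))) * Ukᵀ) := by
            simp [Matrix.mul_assoc]
        _ = Uk * Matrix.diagonal (fun j : Fin k => -(lam (Fin.castLE hk j))) * Ukᵀ := by
            rw [hQQ, Matrix.mul_one]
            simp only [← Matrix.mul_assoc]
            rw [Matrix.mul_assoc Uk, Matrix.diagonal_mul_diagonal]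
            simp [hsq]
    rw [h1]
    -- entrywise equality
    ext p q
    rw [Matrix.mul_apply, Matrix.mul_apply]
    have hL : ∀ j : Fin k, (Uk * Matrix.diagonal (fun j : Fin k => -(lam (Fin.castLE hk j)))) p j
        * Ukᵀ j q = U p (Fin.castLE hk j) * (-(lam (Fin.castLE hk j))) * U q (Fin.castLE hk j) := by
      intro j
      rw [Matrix.mul_diagonal, Matrix.transpose_apply, hUk]
      simp [mul_comm, mul_assoc, mul_left_comm]
    have hR : ∀ i : Fin N, (U * Matrix.diagonal d) p i * Uᵀ i q
        = if (i : ℕ) < k then U p i * (-(lam i)) * U q i else 0 := by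
      intro i
      rw [Matrix.mul_diagonal, Matrix.transpose_apply, hd]
      by_cases h : (i : ℕ) < k <;> simp [h] <;> ring
    simp only [hL, hR]
    rw [Finset.sum_ite, Finset.sum_const_zero, add_zero]
    have hmap : (Finset.univ.filter (fun i : Fin N => (i : ℕ) < k))
        = Finset.univ.map (Fin.castLEEmb hk) := by
      ext i
      simp only [Finset.mem_filter, Finset.mem_univ, true_and, Finset.mem_map,
        Fin.castLEEmb_apply]
      constructor
      · intro h; exact ⟨⟨(i : ℕ), h⟩, by ext; simp⟩
      · rintro ⟨j, rfl⟩; simpa using j.isLt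
    rw [hmap, Finset.sum_map]
    simp
  -- A + X Xᵀ = U diag g Uᵀ
  set g : Fin N → ℝ := fun i => if (i : ℕ) < k then 0 else lam i with hg
  have hM : A + X * Xᵀ = U * Matrix.diagonal g * Uᵀ := by
    have hfg : (fun i => lam i + d i) = g := by
      funext i
      by_cases h : (i : ℕ) < k <;> simp [hd, hg, h]
    rw [hdecomp, hXXt, ← Matrix.add_mul, ← Matrix.mul_add, Matrix.diagonal_add, hfg]
  rw [hM]
  have ht : (U * Matrix.diagonal g * Uᵀ)ᵀ = U * Matrix.diagonal g * Uᵀ := by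
    rw [Matrix.transpose_mul, Matrix.transpose_mul, Matrix.diagonal_transpose,
      Matrix.transpose_transpose, Matrix.mul_assoc]
  rw [ht]
  have hmul : (U * Matrix.diagonal g * Uᵀ) * (U * Matrix.diagonal g * Uᵀ)
      = U * Matrix.diagonal (fun i => g i * g i) * Uᵀ := by
    calc (U * Matrix.diagonal g * Uᵀ) * (U * Matrix.diagonal g * Uᵀ)
        = U * Matrix.diagonal g * (Uᵀ * U) * (Matrix.diagonal g * Uᵀ) := by
          simp [Matrix.mul_assoc]
      _ = U * Matrix.diagonal (fun i => g i * g i) * Uᵀ := by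
          rw [hUorth, Matrix.mul_one, Matrix.mul_assoc,
            ← Matrix.mul_assoc (Matrix.diagonal g), Matrix.diagonal_mul_diagonal,
            ← Matrix.mul_assoc]
  rw [hmul, Matrix.trace_mul_comm, ← Matrix.mul_assoc, hUorth, Matrix.one_mul,
    Matrix.trace_diagonal]
  rw [Finset.sum_filter]
  apply Finset.sum_congr rfl
  intro i _
  by_cases h : (i : ℕ) < k
  · simp [hg, h, Nat.not_le.mpr h]
  · simp [hg, h, Nat.le_of_not_lt h, pow_two]
end

section
/- If A is symmetric and X satisfies A X + X X^T X = 0 with X of full column rank k, then the column space of X is an invariant subspace of A, and -X^T X (which is symmetric positive semidefinite) has eigenvalues equal to the negatives of k eigenvalues of A restricted to that subspace; in particular X^T X is similar to -Λ for a diagonal matrix Λ of k negative eigenvalues of A. -/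
/-!
Rewriting the stationarity condition as `A X = X (-XᵀX)` exhibits the column space of `X` as
`A`-invariant. Full column rank makes `X` injective, so the Gram matrix `XᵀX` is positive
definite; diagonalising it by the spectral theorem, each eigenvector `v` of `XᵀX` with eigenvalue
`d > 0` is carried by `X` to an eigenvector `X v` of `A` with eigenvalue `-d < 0`.
-/

open Matrix

namespace Matrix

variable {m n 𝕜 : Type*} [Fintype n]

theorem mulVec_injective_of_rank_eq_card {K : Type*} [Field K] {X : Matrix m n K}
    (hX : X.rank = Fintype.card n) : Function.Injective X.mulVec := by
  refine mulVec_injective_iff.mpr (linearIndependent_iff_card_eq_finrank_span.mpr ?_)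
  rw [Set.finrank, ← rank_eq_finrank_span_cols, hX]

theorem exists_ne_zero_mulVec_eq_smul_of_mul_eq_mul [Fintype m] {R : Type*} [CommRing R]
    {A : Matrix m m R} {X : Matrix m n R} {B : Matrix n n R} (hAX : A * X = X * B)
    (hX : Function.Injective X.mulVec) {μ : R} (hB : ∃ v : n → R, v ≠ 0 ∧ B *ᵥ v = μ • v) :
    ∃ w : m → R, w ≠ 0 ∧ A *ᵥ w = μ • w := by
  obtain ⟨v, hv0, hv⟩ := hB
  refine ⟨X *ᵥ v, fun h => hv0 (hX (h.trans (mulVec_zero X).symm)), ?_⟩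
  rw [mulVec_mulVec, hAX, ← mulVec_mulVec, hv, mulVec_smul]

variable [RCLike 𝕜] [DecidableEq n] {G : Matrix n n 𝕜}

theorem IsHermitian.exists_isUnit_eq_mul_diagonal_mul_inv (hG : G.IsHermitian) :
    ∃ P : Matrix n n 𝕜, IsUnit P ∧
      G = P * diagonal (RCLike.ofReal ∘ hG.eigenvalues) * P⁻¹ := by
  have hP : (hG.eigenvectorUnitary : Matrix n n 𝕜) * star hG.eigenvectorUnitary = 1 :=
    Unitary.mul_star_self_of_mem hG.eigenvectorUnitary.2
  refine ⟨hG.eigenvectorUnitary, Unitary.isUnit_coe, ?_⟩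
  rw [inv_eq_right_inv hP]
  exact hG.spectral_theorem

theorem IsHermitian.exists_ne_zero_mulVec_eq_smul (hG : G.IsHermitian) (i : n) :
    ∃ v : n → 𝕜, v ≠ 0 ∧ G *ᵥ v = hG.eigenvalues i • v := by
  refine ⟨hG.eigenvectorBasis i, fun h => ?_, hG.mulVec_eigenvectorBasis i⟩
  exact hG.eigenvectorBasis.orthonormal.ne_zero i (WithLp.ofLp_injective 2 h)

end Matrix

theorem stationary_f1_structure_general
    (N k : ℕ) (A : Matrix (Fin N) (Fin N) ℝ)
    (X : Matrix (Fin N) (Fin k) ℝ)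
    (hrank : X.rank = k)
    (hstat : A * X + X * (Xᵀ * X) = 0) :
    (∃ B : Matrix (Fin k) (Fin k) ℝ, A * X = X * B) ∧
      (Xᵀ * X).PosSemidef ∧
      (∃ (P : Matrix (Fin k) (Fin k) ℝ) (lam : Fin k → ℝ),
        IsUnit P ∧ (∀ i, lam i < 0) ∧
        (∀ i, ∃ v : Fin N → ℝ, v ≠ 0 ∧ A *ᵥ v = lam i • v) ∧
        Xᵀ * X = P * Matrix.diagonal (fun i => -(lam i)) * P⁻¹) := by
  have hAX : A * X = X * -(Xᵀ * X) := by
    rw [Matrix.mul_neg, eq_neg_iff_add_eq_zero, hstat]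
  have hX : Function.Injective X.mulVec :=
    mulVec_injective_of_rank_eq_card (by rw [hrank, Fintype.card_fin])
  have hG : (Xᵀ * X).PosDef := by
    simpa only [conjTranspose_eq_transpose_of_trivial] using PosDef.conjTranspose_mul_self X hX
  obtain ⟨P, hP, hdiag⟩ := hG.isHermitian.exists_isUnit_eq_mul_diagonal_mul_inv
  refine ⟨⟨_, hAX⟩, hG.posSemidef, P, fun i => -hG.isHermitian.eigenvalues i, hP,
    fun i => neg_neg_of_pos (hG.eigenvalues_pos i), fun i => ?_, by simpa using hdiag⟩
  refine exists_ne_zero_mulVec_eq_smul_of_mul_eq_mul hAX hX ?_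
  obtain ⟨v, hv0, hv⟩ := hG.isHermitian.exists_ne_zero_mulVec_eq_smul i
  exact ⟨v, hv0, by rw [neg_mulVec, hv, neg_smul]⟩

/-- If `A` is symmetric and `X` of full column rank `k` satisfies the
stationarity condition `A X + X XᵀX = 0`, then the column space of `X` is an
invariant subspace of `A` (i.e. `A X = X B` for some `B`), `XᵀX` is symmetric
positive semidefinite, and `XᵀX` is similar to `-Λ` for a diagonal matrix `Λ`
consisting of `k` negative eigenvalues of `A`. -/
theorem stationary_f1_structure
    (N k : ℕ) (A : Matrix (Fin N) (Fin N) ℝ) (hA : A.IsSymm)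
    (X : Matrix (Fin N) (Fin k) ℝ)
    (hrank : X.rank = k)
    (hstat : A * X + X * (Xᵀ * X) = 0) :
    (∃ B : Matrix (Fin k) (Fin k) ℝ, A * X = X * B) ∧
      (Xᵀ * X).PosSemidef ∧
      (∃ (P : Matrix (Fin k) (Fin k) ℝ) (lam : Fin k → ℝ),
        IsUnit P ∧ (∀ i, lam i < 0) ∧
        (∀ i, ∃ v : Fin N → ℝ, v ≠ 0 ∧ A *ᵥ v = lam i • v) ∧
        Xᵀ * X = P * Matrix.diagonal (fun i => -(lam i)) * P⁻¹) :=
  stationary_f1_structure_general N k A X hrank hstat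
end
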